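/- Define the layer pressures p_α = g( h_α/2 + Σ_{j=α+1}^N h_j ) and interface pressures p_{α+1/2} = g Σ_{j=α+1}^N h_j. Then for each α = 1,…,N the identity ∂/∂x (h_α p_α) − p_{α+1/2} ∂_x z_{α+1/2} + p_{α−1/2} ∂_x z_{α−1/2} = ∂/∂x ( (g/2) H h_α ) + g h_α ∂_x z_b holds. -/

import Mathlib

/-- The interface heights `z_{α+1/2}(x,t) = z_b(x) + Σ_{j=1}^α l_j H(x,t)`. -/
noncomputable def zhalf (zb : ℝ → ℝ) (H : ℝ → ℝ → ℝ) (l : ℕ → ℝ) (α : ℕ) (x t : ℝ) : ℝ :=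
  zb x + ∑ j ∈ Finset.Icc 1 α, l j * H x t

/-- The layer pressure `p_α = g( h_α/2 + Σ_{j=α+1}^N h_j )`, with `h_j = l_j H`. -/
noncomputable def player (H : ℝ → ℝ → ℝ) (l : ℕ → ℝ) (g : ℝ) (N α : ℕ) (x t : ℝ) : ℝ :=
  g * (l α * H x t / 2 + ∑ j ∈ Finset.Icc (α + 1) N, l j * H x t)

/-- The interface pressure `p_{α+1/2} = g Σ_{j=α+1}^N h_j` (index `α` means `α+1/2`). -/
noncomputable def phalf (H : ℝ → ℝ → ℝ) (l : ℕ → ℝ) (g : ℝ) (N α : ℕ) (x t : ℝ) : ℝ :=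
  g * ∑ j ∈ Finset.Icc (α + 1) N, l j * H x t

/-! With `P = Σ_{j<α} l_j` and `S = Σ_{j>α} l_j`, so that `P + l_α + S = 1`, the interface
heights `z_{α±1/2}` differ by `h_α` and the interface pressures `p_{α±1/2}` by `g h_α`.
The `∂_x z_b` terms therefore leave exactly `g h_α ∂_x z_b`, and the product rule turns every
remaining term into a multiple of `g l_α H ∂_x H`, the coefficients adding up to
`P + l_α + S = 1`; this is `∂_x((g/2) H h_α)`. -/

open Finset

theorem Finset.sum_Icc_add_sum_Icc_add_one {M : Type*} [AddCommMonoid M] (f : ℕ → M)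
    {a b c : ℕ} (hab : a ≤ b + 1) (hbc : b ≤ c) :
    ∑ i ∈ Icc a b, f i + ∑ i ∈ Icc (b + 1) c, f i = ∑ i ∈ Icc a c, f i := by
  simpa only [Ico_add_one_right_eq_Icc] using sum_Ico_consecutive f hab (Nat.add_le_add_right hbc 1)

theorem deriv_layer_pressure_balance {h b : ℝ → ℝ} {h' b' x : ℝ}
    (hh : HasDerivAt h h' x) (hb : HasDerivAt b b' x) (g a P S : ℝ) (hsum : P + a + S = 1) :
    deriv (fun y => a * h y * (g * (a * h y / 2 + S * h y))) x
        - g * (S * h x) * deriv (fun y => b y + (P + a) * h y) x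
        + g * ((a + S) * h x) * deriv (fun y => b y + P * h y) x
      = deriv (fun y => g / 2 * h y * (a * h y)) x + g * (a * h x) * b' := by
  rw [((hh.const_mul a).fun_mul
      ((((hh.const_mul a).div_const 2).fun_add (hh.const_mul S)).const_mul g)).deriv,
    (hb.fun_add (hh.const_mul (P + a))).deriv, (hb.fun_add (hh.const_mul P)).deriv,
    ((hh.const_mul (g / 2)).fun_mul (hh.const_mul a)).deriv]
  linear_combination g * a * h x * h' * hsum

theorem stmt6 (N : ℕ) (l : ℕ → ℝ)
    (hlsum : ∑ j ∈ Finset.Icc 1 N, l j = 1)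
    (g : ℝ)
    (zb : ℝ → ℝ) (H : ℝ → ℝ → ℝ)
    (hzb : ContDiff ℝ (⊤ : ℕ∞) zb)
    (hH : ContDiff ℝ (⊤ : ℕ∞) (fun q : ℝ × ℝ => H q.1 q.2)) :
    ∀ α ∈ Finset.Icc 1 N, ∀ x t : ℝ,
      deriv (fun x' => l α * H x' t * player H l g N α x' t) x
        - phalf H l g N α x t * deriv (fun x' => zhalf zb H l α x' t) x
        + phalf H l g N (α - 1) x t * deriv (fun x' => zhalf zb H l (α - 1) x' t) x
      = deriv (fun x' => g / 2 * H x' t * (l α * H x' t)) x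
        + g * (l α * H x t) * deriv zb x := by
  intro α hα x t
  obtain ⟨hα1, hαN⟩ := mem_Icc.mp hα
  obtain ⟨k, rfl⟩ := Nat.exists_eq_add_of_le' hα1
  have hHt : Differentiable ℝ (fun x' => H x' t) :=
    (hH.differentiable (by simp)).comp (differentiable_id.prodMk (differentiable_const t))
  simp only [player, phalf, zhalf, ← sum_mul, Nat.add_sub_cancel]
  rw [sum_Icc_succ_top (Nat.le_add_left 1 k), ← add_sum_Ioc_eq_sum_Icc hαN,
    ← Icc_add_one_left_eq_Ioc]
  refine deriv_layer_pressure_balance (hHt x).hasDerivAt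
    (hzb.differentiable (by simp) x).hasDerivAt _ _ _ _ ?_
  rw [← sum_Icc_succ_top (Nat.le_add_left 1 k),
    sum_Icc_add_sum_Icc_add_one l (Nat.le_add_left 1 _) hαN, hlsum]
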